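/- Let ψ, φ ∈ R^n be probability vectors with ψ strictly majorized by φ. Then for every integer k ≥ 1, the k-fold tensor power ψ^{⊗k} is strictly majorized by φ^{⊗k}. -/

import Mathlib

open Finset

/-- `eSum v m` is the sum of the `m` largest entries of `v`
(the supremum of sums over subsets of cardinality `m`). -/
noncomputable def eSum {ι : Type} [Fintype ι] (v : ι → ℝ) (m : ℕ) : ℝ :=
  sSup {x | ∃ s : Finset ι, s.card = m ∧ x = ∑ i ∈ s, v i}

/-- Majorization `x ≺ y`: partial sums of largest entries of `x` are dominated
by those of `y`, with equal total sums. -/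
def Maj {ι κ : Type} [Fintype ι] [Fintype κ] (x : ι → ℝ) (y : κ → ℝ) : Prop :=
  (∀ m : ℕ, 1 ≤ m → m < Fintype.card ι → eSum x m ≤ eSum y m) ∧
    ∑ i, x i = ∑ j, y j

/-- Strict majorization `x ◁ y`: all inequalities strict, total sums equal. -/
def SMaj {ι κ : Type} [Fintype ι] [Fintype κ] (x : ι → ℝ) (y : κ → ℝ) : Prop :=
  (∀ m : ℕ, 1 ≤ m → m < Fintype.card ι → eSum x m < eSum y m) ∧
    ∑ i, x i = ∑ j, y j

/-- Global uniformity: smallest entry divided by largest entry. -/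
noncomputable def gu {ι : Type} [Fintype ι] (v : ι → ℝ) : ℝ :=
  sInf (Set.range v) / sSup (Set.range v)

/-- The set of ratios `v b / v a` over consecutive distinct values `v b < v a`
(no value strictly in between). -/
def ratioSet {ι : Type} [Fintype ι] (v : ι → ℝ) : Set ℝ :=
  {r | ∃ a b : ι, v b < v a ∧ (¬ ∃ c : ι, v b < v c ∧ v c < v a) ∧ r = v b / v a}

open Classical in
noncomputable def lu {ι : Type} [Fintype ι] (v : ι → ℝ) : ℝ :=
  if (∃ a b : ι, v a ≠ v b) then sInf (ratioSet v) else 1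

open Classical in
/-- Maximal local uniformity: maximum ratio of consecutive distinct values;
`1` for a constant vector. -/
noncomputable def Lu {ι : Type} [Fintype ι] (v : ι → ℝ) : ℝ :=
  if (∃ a b : ι, v a ≠ v b) then sSup (ratioSet v) else 1

/-- Tensor (Kronecker) product of two vectors. -/
def tens {ι κ : Type} (x : ι → ℝ) (y : κ → ℝ) : ι × κ → ℝ :=
  fun p => x p.1 * y p.2

/-- `k`-fold tensor power of a vector. -/
def tpow {n : ℕ} (v : Fin n → ℝ) (k : ℕ) : (Fin k → Fin n) → ℝ :=
  fun f => ∏ i, v (f i)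

/-- A probability vector: nonnegative entries summing to one. -/
def IsProb {ι : Type} [Fintype ι] (v : ι → ℝ) : Prop :=
  (∀ i, 0 ≤ v i) ∧ ∑ i, v i = 1

/-- `v` sorted in non-increasing order. -/
noncomputable def sortDesc {n : ℕ} (v : Fin n → ℝ) : Fin n → ℝ :=
  fun i => v (Tuple.sort v i.rev)

/-- Shannon entropy (base 2), with the convention `0 log 0 = 0`. -/
noncomputable def entH {ι : Type} [Fintype ι] (v : ι → ℝ) : ℝ :=
  -∑ i, v i * Real.logb 2 (v i)

/-!
Write `e_m` for the sum of the `m` largest entries. A set `S` of `m` index pairs has rows of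
sizes `M i`, so `∑_S ψ ⊗ x ≤ ∑_i ψ_i e_{M_i}(x) ≤ ∑_i ψ_i e_{M_i}(y)`. Sorting `y` and
exchanging the order of summation, the last sum is at most `∑_s y_(s) e_{N_s}(φ)` with
`N_s = #{i | s < M_i}`, a sum of `φ ⊗ y` over `∑_s N_s = m` pairs, hence at most `e_m(φ ⊗ y)`.
Strict majorization forces every entry of `ψ` to be positive, so the second inequality is
strict unless each row of `S` is empty or full; then `S = T × κ` and `e_{#T}(ψ) < e_{#T}(φ)`
gives strictness instead.
-/

variable {ι κ : Type} [Fintype ι] [Fintype κ]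

lemma eSum_set_finite (v : ι → ℝ) (m : ℕ) :
    {x | ∃ s : Finset ι, #s = m ∧ x = ∑ i ∈ s, v i}.Finite :=
  (Set.finite_range fun s : Finset ι => ∑ i ∈ s, v i).subset <| by
    rintro _ ⟨s, -, rfl⟩
    exact ⟨s, rfl⟩

lemma sum_le_eSum (v : ι → ℝ) (s : Finset ι) : ∑ i ∈ s, v i ≤ eSum v #s :=
  le_csSup (eSum_set_finite v _).bddAbove ⟨s, rfl, rfl⟩

lemma exists_sum_eq_eSum (v : ι → ℝ) {m : ℕ} (hm : m ≤ Fintype.card ι) :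
    ∃ s : Finset ι, #s = m ∧ ∑ i ∈ s, v i = eSum v m := by
  obtain ⟨s, -, hs⟩ := exists_subset_card_eq (s := univ) (by simpa using hm)
  obtain ⟨t, ht, h⟩ := Set.Nonempty.csSup_mem (s := {x | ∃ s : Finset ι, #s = m ∧ x = ∑ i ∈ s, v i})
    ⟨_, s, hs, rfl⟩ (eSum_set_finite v m)
  exact ⟨t, ht, h.symm⟩

lemma eSum_zero (v : ι → ℝ) : eSum v 0 = 0 := by
  obtain ⟨s, hs, h⟩ := exists_sum_eq_eSum v (Nat.zero_le _)
  rw [← h, card_eq_zero.1 hs, sum_empty]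

lemma eSum_card (v : ι → ℝ) : eSum v (Fintype.card ι) = ∑ i, v i := by
  obtain ⟨s, hs, h⟩ := exists_sum_eq_eSum v le_rfl
  rw [← h, eq_univ_of_card s hs]

lemma eSum_le_sum {v : ι → ℝ} (hv : ∀ i, 0 ≤ v i) {m : ℕ} (hm : m ≤ Fintype.card ι) :
    eSum v m ≤ ∑ i, v i := by
  obtain ⟨s, -, h⟩ := exists_sum_eq_eSum v hm
  exact h ▸ sum_le_univ_sum_of_nonneg fun i => hv i

lemma eSum_comp_equiv (v : ι → ℝ) (e : κ ≃ ι) (m : ℕ) : eSum (v ∘ e) m = eSum v m := by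
  unfold eSum
  congr 1
  ext x
  constructor
  · rintro ⟨s, rfl, rfl⟩
    exact ⟨s.map e.toEmbedding, card_map _, by simp⟩
  · rintro ⟨s, rfl, rfl⟩
    exact ⟨s.map e.symm.toEmbedding, card_map _, by simp⟩

lemma exists_equiv_antitone {α : Type*} [LinearOrder α] (v : ι → α) :
    ∃ g : Fin (Fintype.card ι) ≃ ι, Antitone (v ∘ g) := by
  let e := (Fintype.equivFin ι).symm
  exact ⟨Fin.revPerm.trans ((Tuple.sort (v ∘ e)).trans e),
    fun i j hij => Tuple.monotone_sort (v ∘ e) (Fin.rev_le_rev.2 hij)⟩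

lemma Antitone.sum_le_sum_filter_lt {c : ℕ} {w : Fin c → ℝ} (hw : Antitone w)
    (T : Finset (Fin c)) : ∑ s ∈ T, w s ≤ ∑ s ∈ {s : Fin c | (s : ℕ) < #T}, w s := by
  let f := T.orderEmbOfFin rfl
  have hT : #T ≤ c := by simpa using card_le_univ T
  have hf : ∀ j : Fin #T, (j : ℕ) ≤ f j := fun j => by
    have hsub : (Iio j).map f.toEmbedding ⊆ Iio (f j) := by
      intro x hx
      obtain ⟨i, hi, rfl⟩ := mem_map.1 hx
      exact mem_Iio.2 (f.strictMono (mem_Iio.1 hi))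
    simpa using card_le_card hsub
  have hprefix : univ.map (Fin.castLEEmb hT) = ({s : Fin c | (s : ℕ) < #T} : Finset (Fin c)) := by
    ext s
    simp only [mem_map, mem_univ, true_and, mem_filter, Fin.castLEEmb_apply]
    exact ⟨fun ⟨j, hj⟩ => hj ▸ j.2, fun hs => ⟨⟨s, hs⟩, rfl⟩⟩
  calc ∑ s ∈ T, w s = ∑ s ∈ univ.map f.toEmbedding, w s := by rw [map_orderEmbOfFin_univ]
    _ = ∑ j, w (f j) := sum_map _ _ _
    _ ≤ ∑ j, w (Fin.castLE hT j) := sum_le_sum fun j _ => hw (hf j)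
    _ = _ := by rw [← hprefix, sum_map]; rfl

lemma eSum_eq_sum_of_antitone {v : ι → ℝ} {g : Fin (Fintype.card ι) ≃ ι} (hg : Antitone (v ∘ g))
    {t : ℕ} (ht : t ≤ Fintype.card ι) :
    eSum v t = ∑ s ∈ {s : Fin (Fintype.card ι) | (s : ℕ) < t}, v (g s) := by
  apply le_antisymm
  · obtain ⟨T, rfl, h⟩ := exists_sum_eq_eSum v ht
    calc eSum v #T = ∑ s ∈ T.map g.symm.toEmbedding, v (g s) := by simp [← h]
      _ ≤ _ := by simpa using hg.sum_le_sum_filter_lt (T.map g.symm.toEmbedding)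
  · have hP : #{s : Fin (Fintype.card ι) | (s : ℕ) < t} = t := by
      rw [Fin.card_filter_val_lt, min_eq_right ht]
    simpa [hP] using sum_le_eSum v (({s : Fin (Fintype.card ι) | (s : ℕ) < t} :
      Finset (Fin (Fintype.card ι))).map g.toEmbedding)


lemma sum_tens (u : ι → ℝ) (v : κ → ℝ) : ∑ p, tens u v p = (∑ i, u i) * ∑ j, v j := by
  rw [sum_mul_sum, ← Fintype.sum_prod_type']
  rfl

lemma sum_tens_le_sum_mul_eSum [DecidableEq ι] [DecidableEq κ] {u : ι → ℝ} (hu : ∀ i, 0 ≤ u i)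
    (v : κ → ℝ) (S : Finset (ι × κ)) :
    ∑ p ∈ S, tens u v p ≤ ∑ i, u i * eSum v #{j | (i, j) ∈ S} := by
  rw [sum_finset_product S univ (fun i => {j | (i, j) ∈ S}) (by simp)]
  gcongr with i
  simp only [tens, ← mul_sum]
  exact mul_le_mul_of_nonneg_left (sum_le_eSum v _) (hu i)

lemma sum_card_rows [DecidableEq ι] [DecidableEq κ] (S : Finset (ι × κ)) :
    ∑ i, #{j | (i, j) ∈ S} = #S := by
  rw [card_eq_sum_ones S, sum_finset_product S univ (fun i => {j | (i, j) ∈ S}) (by simp)]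
  simp

lemma sum_eSum_mul_le_eSum_tens (w : ι → ℝ) (v : κ → ℝ) (N : κ → ℕ)
    (hN : ∀ j, N j ≤ Fintype.card ι) :
    ∑ j, eSum w (N j) * v j ≤ eSum (tens w v) (∑ j, N j) := by
  classical
  choose A hA hsum using fun j => exists_sum_eq_eSum w (hN j)
  let S : Finset (ι × κ) := {p | p.1 ∈ A p.2}
  have hS : ∀ p, p ∈ S ↔ p.2 ∈ univ ∧ p.1 ∈ A p.2 := by simp [S]
  have hcard : #S = ∑ j, N j := by
    rw [card_eq_sum_ones, sum_finset_product_right S univ A hS]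
    simp [hA]
  calc ∑ j, eSum w (N j) * v j = ∑ p ∈ S, tens w v p := by
        rw [sum_finset_product_right S univ A hS]
        simp [tens, ← hsum, sum_mul]
    _ ≤ _ := hcard ▸ sum_le_eSum _ S

lemma sum_mul_eSum_le_eSum_tens {u w : ι → ℝ} (huw : ∀ t ≤ Fintype.card ι, eSum u t ≤ eSum w t)
    {v : κ → ℝ} (hv : ∀ j, 0 ≤ v j) (M : ι → ℕ) (hM : ∀ i, M i ≤ Fintype.card κ) :
    ∑ i, u i * eSum v (M i) ≤ eSum (tens w v) (∑ i, M i) := by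
  classical
  obtain ⟨g, hg⟩ := exists_equiv_antitone v
  let N : κ → ℕ := fun j => #{i | ((g.symm j : Fin _) : ℕ) < M i}
  have hN : ∑ j, N j = ∑ i, M i := by
    rw [← Equiv.sum_comp g]
    simp only [N, Equiv.symm_apply_apply, card_filter]
    rw [sum_comm]
    refine sum_congr rfl fun i _ => ?_
    rw [← card_filter, Fin.card_filter_val_lt, min_eq_right (hM i)]
  calc ∑ i, u i * eSum v (M i)
      = ∑ s : Fin (Fintype.card κ), (∑ i ∈ {i | (s : ℕ) < M i}, u i) * v (g s) := by
        simp_rw [eSum_eq_sum_of_antitone hg (hM _), mul_sum, sum_mul, sum_filter]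
        rw [sum_comm]
    _ ≤ ∑ s, eSum w (N (g s)) * v (g s) := by
        gcongr with s
        · exact hv _
        · simpa [N] using (sum_le_eSum u _).trans (huw _ (card_le_univ _))
    _ = ∑ j, eSum w (N j) * v j := Equiv.sum_comp g (fun j => eSum w (N j) * v j)
    _ ≤ _ := hN ▸ sum_eSum_mul_le_eSum_tens w v N fun j => card_le_univ _

lemma SMaj.eSum_le {x y : ι → ℝ} (h : SMaj x y) {t : ℕ} (ht : t ≤ Fintype.card ι) :
    eSum x t ≤ eSum y t := by
  rcases Nat.eq_zero_or_pos t with rfl | ht0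
  · rw [eSum_zero, eSum_zero]
  rcases ht.eq_or_lt with rfl | htc
  · rw [eSum_card, eSum_card, h.2]
  · exact (h.1 t ht0 htc).le

lemma SMaj.pos {x y : ι → ℝ} (hy : IsProb y) (h : SMaj x y) (i : ι) : 0 < x i := by
  classical
  have hc : 0 < Fintype.card ι := Fintype.card_pos_iff.2 ⟨i⟩
  have hlt : eSum x (Fintype.card ι - 1) < 1 := by
    rcases Nat.eq_zero_or_pos (Fintype.card ι - 1) with h0 | h0
    · rw [h0, eSum_zero]
      exact one_pos
    · exact (h.1 _ h0 (by omega)).trans_le (hy.2 ▸ eSum_le_sum hy.1 (Nat.sub_le _ _))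
  have hrest : ∑ j ∈ univ.erase i, x j ≤ eSum x (Fintype.card ι - 1) := by
    simpa [card_erase_of_mem] using sum_le_eSum x (univ.erase i)
  have hsum := add_sum_erase univ x (mem_univ i)
  linarith [h.2.trans hy.2]

lemma sum_mul_eSum_lt_eSum_tens_of_full_rows {ψ φ : ι → ℝ} {x y : κ → ℝ} (hy : IsProb y)
    (hψφ : SMaj ψ φ) (hxy : SMaj x y) {M : ι → ℕ} (hM : ∀ i, M i = 0 ∨ M i = Fintype.card κ)
    (h1 : 1 ≤ ∑ i, M i) (h2 : ∑ i, M i < Fintype.card ι * Fintype.card κ) :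
    ∑ i, ψ i * eSum x (M i) < eSum (tens φ y) (∑ i, M i) := by
  classical
  set T : Finset ι := {i | M i = Fintype.card κ}
  have hM' : ∀ i, M i = if i ∈ T then Fintype.card κ else 0 := fun i => by
    rcases hM i with h | h <;> simp [T, h]
  have hsumM : ∑ i, M i = #T * Fintype.card κ := by
    simp_rw [hM']
    rw [sum_ite_mem, univ_inter, sum_const, smul_eq_mul]
  have hsumx : ∑ i, ψ i * eSum x (M i) = ∑ i ∈ T, ψ i := by
    simp_rw [hM', apply_ite, eSum_card, eSum_zero, hxy.2, hy.2, mul_one, mul_zero]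
    rw [sum_ite_mem, univ_inter]
  rw [hsumM] at h1 h2 ⊢
  have hT1 : 1 ≤ #T := Nat.pos_of_mul_pos_right h1
  have hT2 : #T < Fintype.card ι := Nat.lt_of_mul_lt_mul_right h2
  calc ∑ i, ψ i * eSum x (M i) = ∑ i ∈ T, ψ i := hsumx
    _ ≤ eSum ψ #T := sum_le_eSum ψ T
    _ < eSum φ #T := hψφ.1 _ hT1 hT2
    _ = ∑ j, eSum φ #T * y j := by rw [← mul_sum, hy.2, mul_one]
    _ ≤ eSum (tens φ y) (∑ j : κ, #T) := sum_eSum_mul_le_eSum_tens φ y _ fun _ => hT2.le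
    _ = eSum (tens φ y) (#T * Fintype.card κ) := by
      rw [sum_const, card_univ, smul_eq_mul, mul_comm]

lemma eSum_tens_lt_eSum_tens {ψ φ : ι → ℝ} {x y : κ → ℝ} (hφ : IsProb φ) (hy : IsProb y)
    (hψφ : SMaj ψ φ) (hxy : SMaj x y) {m : ℕ} (hm1 : 1 ≤ m) (hm2 : m < Fintype.card (ι × κ)) :
    eSum (tens ψ x) m < eSum (tens φ y) m := by
  classical
  have hψ := hψφ.pos hφ
  obtain ⟨S, rfl, hS⟩ := exists_sum_eq_eSum (tens ψ x) hm2.le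
  set M : ι → ℕ := fun i => #{j | (i, j) ∈ S}
  have hM : ∀ i, M i ≤ Fintype.card κ := fun i => card_le_univ _
  rw [← hS]
  rw [← sum_card_rows S] at hm1 hm2 ⊢
  refine (sum_tens_le_sum_mul_eSum (fun i => (hψ i).le) x S).trans_lt ?_
  by_cases hmix : ∃ i, 0 < M i ∧ M i < Fintype.card κ
  · obtain ⟨i₀, h0, h1⟩ := hmix
    calc ∑ i, ψ i * eSum x (M i) < ∑ i, ψ i * eSum y (M i) :=
          sum_lt_sum (fun i _ => mul_le_mul_of_nonneg_left (hxy.eSum_le (hM i)) (hψ i).le)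
            ⟨i₀, mem_univ _, mul_lt_mul_of_pos_left (hxy.1 _ h0 h1) (hψ i₀)⟩
      _ ≤ _ := sum_mul_eSum_le_eSum_tens (fun _ => hψφ.eSum_le) hy.1 M hM
  · push Not at hmix
    exact sum_mul_eSum_lt_eSum_tens_of_full_rows hy hψφ hxy
      (fun i => (M i).eq_zero_or_pos.imp_right fun h => (hM i).antisymm (hmix i h)) hm1
      (Fintype.card_prod ι κ ▸ hm2)

theorem SMaj.tens {ψ φ : ι → ℝ} {x y : κ → ℝ} (hφ : IsProb φ) (hy : IsProb y) (hψφ : SMaj ψ φ)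
    (hxy : SMaj x y) : SMaj (tens ψ x) (tens φ y) :=
  ⟨fun _ hm1 hm2 => eSum_tens_lt_eSum_tens hφ hy hψφ hxy hm1 hm2, by
    rw [sum_tens, sum_tens, hψφ.2, hxy.2]⟩

lemma SMaj.comp_equiv {ι' κ' : Type} [Fintype ι'] [Fintype κ'] {x : ι → ℝ} {y : κ → ℝ}
    (h : SMaj x y) (e : ι' ≃ ι) (e' : κ' ≃ κ) : SMaj (x ∘ e) (y ∘ e') :=
  ⟨fun m hm1 hm2 => by
    rw [eSum_comp_equiv, eSum_comp_equiv]
    exact h.1 m hm1 (Fintype.card_congr e ▸ hm2),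
   (e.sum_comp x).trans (h.2.trans (e'.sum_comp y).symm)⟩

lemma sum_tpow {n : ℕ} (v : Fin n → ℝ) (k : ℕ) : ∑ f, tpow v k f = (∑ i, v i) ^ k :=
  (Fintype.sum_pow v k).symm

lemma IsProb.tpow {n : ℕ} {v : Fin n → ℝ} (hv : IsProb v) (k : ℕ) : IsProb (tpow v k) :=
  ⟨fun _ => prod_nonneg fun i _ => hv.1 _, by rw [sum_tpow, hv.2, one_pow]⟩

lemma tpow_succ {n : ℕ} (v : Fin n → ℝ) (k : ℕ) :
    tpow v (k + 1) = tens v (tpow v k) ∘ (Fin.consEquiv fun _ => Fin n).symm := by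
  funext f
  simp [tpow, tens, Fin.prod_univ_succ, Fin.tail]

theorem strict_majorization_tensor_pow_general {n : ℕ} (ψ φ : Fin n → ℝ)
    (hφ : IsProb φ) (h : SMaj ψ φ)
    (k : ℕ) : SMaj (tpow ψ k) (tpow φ k) := by
  induction k with
  | zero => exact ⟨fun m hm1 hm2 => by simp at hm2; omega, by simp [tpow]⟩
  | succ k ih =>
    rw [tpow_succ ψ, tpow_succ φ]
    exact (h.tens hφ (hφ.tpow k) ih).comp_equiv _ _

/-- strict majorization is preserved by tensor powers. -/
theorem strict_majorization_tensor_pow {n : ℕ} (ψ φ : Fin n → ℝ)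
    (hψ : IsProb ψ) (hφ : IsProb φ) (h : SMaj ψ φ)
    (k : ℕ) (hk : 1 ≤ k) : SMaj (tpow ψ k) (tpow φ k) :=
  strict_majorization_tensor_pow_general ψ φ hφ h k
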